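/- There exists a finite complemented lattice that admits no Banaschewski function; specifically, there is a finite complemented lattice F containing elements a ≤ b such that a has a unique complement a′, b has a unique complement b′, and b′ ≰ a′, so no antitone complement-selecting map exists. -/
import Mathlib

namespace Stmt1Aux

/-- Carrier of an 8-element lattice: 0 = ⊥, 7 = ⊤, with 1 < 2, 1 < 5,
4 < 5, 6 < 2, 6 < 3. -/
structure L8 where
  val : Fin 8
deriving DecidableEq

def eqv : Fin 8 ≃ L8 :=
  ⟨L8.mk, L8.val, fun _ => rfl, fun _ => rfl⟩

instance : Fintype L8 := Fintype.ofEquiv (Fin 8) eqv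

def l8le (x y : Fin 8) : Bool :=
  x = y || x = 0 || y = 7 ||
    decide (((x : ℕ), (y : ℕ)) ∈ [(1,2),(1,5),(4,5),(6,2),(6,3)])

def jn (x y : Fin 8) : Fin 8 :=
  if l8le x y then y else if l8le y x then x else
  match (x : ℕ), (y : ℕ) with
  | 1, 4 => 5 | 4, 1 => 5
  | 1, 6 => 2 | 6, 1 => 2
  | _, _ => 7

def mt (x y : Fin 8) : Fin 8 :=
  if l8le x y then x else if l8le y x then y else
  match (x : ℕ), (y : ℕ) with
  | 2, 3 => 6 | 3, 2 => 6
  | 2, 5 => 1 | 5, 2 => 1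
  | _, _ => 0

theorem hrefl : ∀ a : Fin 8, l8le a a = true := by decide
theorem htrans : ∀ a b c : Fin 8, l8le a b = true → l8le b c = true →
    l8le a c = true := by decide
theorem hantisymm : ∀ a b : Fin 8, l8le a b = true → l8le b a = true →
    a = b := by decide
theorem hsupl : ∀ a b : Fin 8, l8le a (jn a b) = true := by decide
theorem hsupr : ∀ a b : Fin 8, l8le b (jn a b) = true := by decide
theorem hsuple : ∀ a b c : Fin 8, l8le a c = true → l8le b c = true →
    l8le (jn a b) c = true := by decide
theorem hinfl : ∀ a b : Fin 8, l8le (mt a b) a = true := by decide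
theorem hinfr : ∀ a b : Fin 8, l8le (mt a b) b = true := by decide
theorem hleinf : ∀ a b c : Fin 8, l8le a b = true → l8le a c = true →
    l8le a (mt b c) = true := by decide
theorem htop : ∀ a : Fin 8, l8le a 7 = true := by decide
theorem hbot : ∀ a : Fin 8, l8le 0 a = true := by decide

instance latt : Lattice L8 where
  le x y := l8le x.val y.val = true
  lt x y := l8le x.val y.val = true ∧ ¬ l8le y.val x.val = true
  le_refl a := hrefl a.val
  le_trans a b c := htrans a.val b.val c.val
  lt_iff_le_not_ge _ _ := Iff.rfl
  le_antisymm a b h1 h2 := by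
    cases a; cases b; exact congrArg L8.mk (hantisymm _ _ h1 h2)
  sup x y := ⟨jn x.val y.val⟩
  le_sup_left a b := hsupl a.val b.val
  le_sup_right a b := hsupr a.val b.val
  sup_le a b c := hsuple a.val b.val c.val
  inf x y := ⟨mt x.val y.val⟩
  inf_le_left a b := hinfl a.val b.val
  inf_le_right a b := hinfr a.val b.val
  le_inf a b c := hleinf a.val b.val c.val

instance bdd : BoundedOrder L8 where
  top := ⟨7⟩
  le_top a := htop a.val
  bot := ⟨0⟩
  bot_le a := hbot a.val

instance decLe (x y : L8) : Decidable (x ≤ y) :=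
  inferInstanceAs (Decidable (l8le x.val y.val = true))

end Stmt1Aux

/-- There is a finite complemented lattice with elements `a ≤ b` having unique
complements `a'`, `b'` with `b' ≰ a'`; hence it has no Banaschewski function. -/
theorem stmt_1 :
    ∃ (L : Type) (_ : Lattice L) (_ : BoundedOrder L) (_ : Fintype L),
      (∀ x : L, ∃ y : L, x ⊔ y = ⊤ ∧ x ⊓ y = ⊥) ∧
      (∃ a b a' b' : L, a ≤ b ∧
        (∀ y : L, (a ⊔ y = ⊤ ∧ a ⊓ y = ⊥) ↔ y = a') ∧
        (∀ y : L, (b ⊔ y = ⊤ ∧ b ⊓ y = ⊥) ↔ y = b') ∧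
        ¬ b' ≤ a') ∧
      ¬ ∃ f : L → L, Antitone f ∧ ∀ x : L, x ⊔ f x = ⊤ ∧ x ⊓ f x = ⊥ := by
  refine ⟨Stmt1Aux.L8, Stmt1Aux.latt, Stmt1Aux.bdd, inferInstance, ?_, ?_, ?_⟩
  · decide
  · exact ⟨⟨1⟩, ⟨2⟩, ⟨3⟩, ⟨4⟩, by decide, by decide, by decide, by decide⟩
  · rintro ⟨f, hf, hc⟩
    have h12 : (⟨1⟩ : Stmt1Aux.L8) ≤ ⟨2⟩ := by decide
    have hle : f ⟨2⟩ ≤ f ⟨1⟩ := hf h12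
    have hu1 : ∀ y : Stmt1Aux.L8,
        ((⟨1⟩ : Stmt1Aux.L8) ⊔ y = ⊤ ∧ (⟨1⟩ : Stmt1Aux.L8) ⊓ y = ⊥) → y = ⟨3⟩ := by
      decide
    have hu2 : ∀ y : Stmt1Aux.L8,
        ((⟨2⟩ : Stmt1Aux.L8) ⊔ y = ⊤ ∧ (⟨2⟩ : Stmt1Aux.L8) ⊓ y = ⊥) → y = ⟨4⟩ := by
      decide
    have h1 : f ⟨1⟩ = ⟨3⟩ := hu1 _ (hc ⟨1⟩)
    have h2 : f ⟨2⟩ = ⟨4⟩ := hu2 _ (hc ⟨2⟩)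
    rw [h1, h2] at hle
    exact absurd hle (by decide)
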